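/- arXiv:1305.6673 — 5 statements merged into one kernel-verified Lean document; each statement's English description precedes it below -/
import Mathlib

section
/- The group G of homographies fixing the translation oval O(2^n) and the line at infinity acts 2-transitively on the q² affine points of O(2^n). -/
open Matrix

variable {F : Type} [Field F]

/-- Two nonzero vectors represent the same projective point. -/
def projEq (v w : Fin 3 → F) : Prop := ∃ c : F, c ≠ 0 ∧ w = c • v

/-- Membership of a nonzero vector's projective point in the translation oval. -/
def ovalMem (n : ℕ) (v : Fin 3 → F) : Prop :=
  (∃ t c : F, c ≠ 0 ∧ v = c • ![t ^ 2 ^ n, t, 1]) ∨ (∃ c : F, c ≠ 0 ∧ v = c • ![1, 0, 0])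

/-- `M` fixes the translation oval (setwise, projectively). -/
def FixesOval (n : ℕ) (M : Matrix (Fin 3) (Fin 3) F) : Prop :=
  ∀ v : Fin 3 → F, v ≠ 0 → (ovalMem n v ↔ ovalMem n (M.mulVec v))

/-- `M` fixes the line `z = 0` (setwise). -/
def FixesLinf (M : Matrix (Fin 3) (Fin 3) F) : Prop :=
  ∀ v : Fin 3 → F, v ≠ 0 → (v 2 = 0 ↔ (M.mulVec v) 2 = 0)

/-! In characteristic 2 the Frobenius power `t ↦ t ^ 2 ^ n` is additive, so every affine map
`t ↦ a t + b` of the parameter line lifts to the homography `ovalAffineMatrix n a b`, which sends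
the oval point of parameter `t` to that of parameter `a t + b`, fixes `(1, 0, 0)` and fixes the
line `z = 0`. Affine maps of a field are already 2-transitive. -/

def ovalAffineMatrix (n : ℕ) (a b : F) : Matrix (Fin 3) (Fin 3) F :=
  ![![a ^ 2 ^ n, 0, b ^ 2 ^ n], ![0, a, b], ![0, 0, 1]]

namespace ovalAffineMatrix

lemma mulVec (n : ℕ) (a b x y z : F) :
    (ovalAffineMatrix n a b).mulVec ![x, y, z] =
      ![a ^ 2 ^ n * x + b ^ 2 ^ n * z, a * y + b * z, z] := by
  funext i
  fin_cases i <;> simp [ovalAffineMatrix, Matrix.mulVec, dotProduct, Fin.sum_univ_three]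

lemma mulVec_ovalPoint [CharP F 2] (n : ℕ) (a b t : F) :
    (ovalAffineMatrix n a b).mulVec ![t ^ 2 ^ n, t, 1] = ![(a * t + b) ^ 2 ^ n, a * t + b, 1] := by
  rw [mulVec, add_pow_char_pow, mul_pow]
  ring_nf

lemma mulVec_infinitePoint (n : ℕ) (a b : F) :
    (ovalAffineMatrix n a b).mulVec ![1, 0, 0] = a ^ 2 ^ n • ![1, 0, 0] := by
  rw [mulVec]
  funext i
  fin_cases i <;> simp

lemma mul [CharP F 2] (n : ℕ) (a b a' b' : F) :
    ovalAffineMatrix n a' b' * ovalAffineMatrix n a b = ovalAffineMatrix n (a' * a) (a' * b + b') := by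
  have frobenius : (a' * b + b') ^ 2 ^ n = a' ^ 2 ^ n * b ^ 2 ^ n + b' ^ 2 ^ n := by
    rw [add_pow_char_pow, mul_pow]
  funext i j
  rw [Matrix.mul_apply]
  fin_cases i <;> fin_cases j <;> simp [ovalAffineMatrix, Fin.sum_univ_three, frobenius, mul_pow]

lemma one (n : ℕ) : ovalAffineMatrix n (1 : F) 0 = 1 := by
  funext i j
  fin_cases i <;> fin_cases j <;> simp [ovalAffineMatrix]

lemma inv_mul [CharP F 2] (n : ℕ) {a : F} (ha : a ≠ 0) (b : F) :
    ovalAffineMatrix n a⁻¹ (a⁻¹ * b) * ovalAffineMatrix n a b = 1 := by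
  rw [mul, inv_mul_cancel₀ ha, CharTwo.add_self_eq_zero, one]

lemma det (n : ℕ) (a b : F) : (ovalAffineMatrix n a b).det = a ^ 2 ^ n * a := by
  rw [Matrix.det_fin_three]
  simp [ovalAffineMatrix]

lemma isUnit_det (n : ℕ) {a : F} (ha : a ≠ 0) (b : F) : IsUnit (ovalAffineMatrix n a b).det := by
  rw [det]
  exact (mul_ne_zero (pow_ne_zero _ ha) ha).isUnit

lemma ovalMem_mulVec [CharP F 2] (n : ℕ) {a : F} (ha : a ≠ 0) (b : F) {v : Fin 3 → F}
    (hv : ovalMem n v) : ovalMem n ((ovalAffineMatrix n a b).mulVec v) := by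
  rcases hv with ⟨t, c, hc, rfl⟩ | ⟨c, hc, rfl⟩
  · exact Or.inl ⟨a * t + b, c, hc, by rw [Matrix.mulVec_smul, mulVec_ovalPoint]⟩
  · refine Or.inr ⟨c * a ^ 2 ^ n, mul_ne_zero hc (pow_ne_zero _ ha), ?_⟩
    rw [Matrix.mulVec_smul, mulVec_infinitePoint, smul_smul]

lemma fixesOval [CharP F 2] (n : ℕ) {a : F} (ha : a ≠ 0) (b : F) :
    FixesOval n (ovalAffineMatrix n a b) := by
  refine fun v _ => ⟨ovalMem_mulVec n ha b, fun hMv => ?_⟩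
  have := ovalMem_mulVec n (inv_ne_zero ha) (a⁻¹ * b) hMv
  rwa [Matrix.mulVec_mulVec, inv_mul n ha, Matrix.one_mulVec] at this

lemma fixesLinf (n : ℕ) (a b : F) : FixesLinf (ovalAffineMatrix n a b) := by
  intro v _
  have : (ovalAffineMatrix n a b).mulVec v 2 = v 2 := by
    simp [ovalAffineMatrix, Matrix.mulVec, dotProduct, Fin.sum_univ_three]
  rw [this]

end ovalAffineMatrix

lemma exists_affine_map_of_ne {t₁ t₂ s₁ s₂ : F} (ht : t₁ ≠ t₂) (hs : s₁ ≠ s₂) :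
    ∃ a b : F, a ≠ 0 ∧ a * t₁ + b = s₁ ∧ a * t₂ + b = s₂ := by
  have ht' : t₁ - t₂ ≠ 0 := sub_ne_zero.mpr ht
  refine ⟨(s₁ - s₂) / (t₁ - t₂), s₁ - (s₁ - s₂) / (t₁ - t₂) * t₁,
    div_ne_zero (sub_ne_zero.mpr hs) ht', by ring, ?_⟩
  field_simp
  ring

theorem stmt2_general (n : ℕ) [CharP F 2] :
    ∀ t₁ t₂ s₁ s₂ : F, t₁ ≠ t₂ → s₁ ≠ s₂ →
      ∃ M : Matrix (Fin 3) (Fin 3) F, IsUnit M.det ∧ FixesOval n M ∧ FixesLinf M ∧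
        projEq (M.mulVec ![t₁ ^ 2 ^ n, t₁, 1]) ![s₁ ^ 2 ^ n, s₁, 1] ∧
        projEq (M.mulVec ![t₂ ^ 2 ^ n, t₂, 1]) ![s₂ ^ 2 ^ n, s₂, 1] := by
  intro t₁ t₂ s₁ s₂ ht hs
  obtain ⟨a, b, ha, h₁, h₂⟩ := exists_affine_map_of_ne ht hs
  refine ⟨ovalAffineMatrix n a b, ovalAffineMatrix.isUnit_det n ha b,
    ovalAffineMatrix.fixesOval n ha b, ovalAffineMatrix.fixesLinf n a b, ?_, ?_⟩
  · exact ⟨1, one_ne_zero, by rw [ovalAffineMatrix.mulVec_ovalPoint, h₁, one_smul]⟩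
  · exact ⟨1, one_ne_zero, by rw [ovalAffineMatrix.mulVec_ovalPoint, h₂, one_smul]⟩

/-- The group of homographies fixing the translation oval O(2^n) and the line at infinity
acts 2-transitively on the q² affine points of O(2^n). -/
theorem stmt2 (h n : ℕ) (hh : 1 ≤ h) (hn : Nat.gcd n h = 1) (hq : 2 < 2 ^ h) [Fintype F]
    (hcard : Fintype.card F = 2 ^ (2 * h)) [CharP F 2] :
    ∀ t₁ t₂ s₁ s₂ : F, t₁ ≠ t₂ → s₁ ≠ s₂ →
      ∃ M : Matrix (Fin 3) (Fin 3) F, IsUnit M.det ∧ FixesOval n M ∧ FixesLinf M ∧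
        projEq (M.mulVec ![t₁ ^ 2 ^ n, t₁, 1]) ![s₁ ^ 2 ^ n, s₁, 1] ∧
        projEq (M.mulVec ![t₂ ^ 2 ^ n, t₂, 1]) ![s₂ ^ 2 ^ n, s₂, 1] :=
  stmt2_general n
end

section
/- The group G of homographies fixing the translation oval and the line at infinity acts transitively (in fact regularly) on the q⁴−q² affine points of PG(2,q²) not on the oval: the only element of G fixing the point (0,1,1) is the identity. -/
open Matrix

variable {F : Type} [Field F]

/-- The shaped matrix `[[e^{2^n},0,f^{2^n}],[0,e,f],[0,0,1]]`; for e ≠ 0 these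
represent exactly the homographies fixing the translation oval O(2^n) and ℓ∞. -/
def shaped (n : ℕ) (e f : F) : Matrix (Fin 3) (Fin 3) F :=
  !![e ^ 2 ^ n, 0, f ^ 2 ^ n; 0, e, f; 0, 0, 1]

lemma frob_bij (n : ℕ) [Fintype F] [CharP F 2] :
    Function.Bijective (fun x : F => x ^ 2 ^ n) := by
  have hinj : Function.Injective (fun x : F => x ^ 2 ^ n) := by
    intro a b hab
    have : (a - b) ^ 2 ^ n = 0 := by
      rw [sub_pow_char_pow]
      simpa using sub_eq_zero_of_eq hab
    have := pow_eq_zero_iff (n := 2 ^ n) (by positivity) |>.mp this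
    exact sub_eq_zero.mp this
  exact ⟨hinj, Finite.surjective_of_injective hinj⟩

/-- G acts transitively (indeed regularly) on the q⁴−q² affine points of PG(2,q²) not on
the translation oval: the only element of G fixing (0,1,1) is the identity, and any affine
non-oval point can be mapped to any other. -/
theorem stmt4 (h n : ℕ) (hh : 1 ≤ h) (hn : Nat.gcd n h = 1) (hq : 2 < 2 ^ h) [Fintype F]
    (hcard : Fintype.card F = 2 ^ (2 * h)) [CharP F 2] :
    (∀ e f : F, e ≠ 0 →
      projEq ((shaped n e f).mulVec ![0, 1, 1]) ![0, 1, 1] → e = 1 ∧ f = 0) ∧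
    (∀ x y x' y' : F, x ≠ y ^ 2 ^ n → x' ≠ y' ^ 2 ^ n →
      ∃ e f : F, e ≠ 0 ∧ projEq ((shaped n e f).mulVec ![x, y, 1]) ![x', y', 1]) := by
  constructor
  · intro e f he ⟨c, hc, hcv⟩
    have h0 := congrFun hcv 0
    have h1 := congrFun hcv 1
    have h2 := congrFun hcv 2
    simp [shaped, Matrix.mulVec, dotProduct, Fin.sum_univ_three] at h0 h1 h2
    subst h2
    have hf : f = 0 := h0.resolve_left one_ne_zero
    subst hf
    constructor
    · linear_combination -h1
    · rfl
  · intro x y x' y' hxy hxy'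
    have h2 : (2 : F) = 0 := CharTwo.two_eq_zero
    have ha : x + y ^ 2 ^ n ≠ 0 := by
      intro hc; exact hxy (by linear_combination hc - y ^ 2 ^ n * h2)
    have ha' : x' + y' ^ 2 ^ n ≠ 0 := by
      intro hc; exact hxy' (by linear_combination hc - y' ^ 2 ^ n * h2)
    obtain ⟨e, he⟩ := (frob_bij (F := F) n).2 ((x' + y' ^ 2 ^ n) / (x + y ^ 2 ^ n))
    simp only at he
    have he0 : e ≠ 0 := by
      intro h0; rw [h0, zero_pow (by positivity)] at he
      exact ha' (by field_simp at he; simpa using he.symm)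
    refine ⟨e, y' + e * y, he0, 1, one_ne_zero, ?_⟩
    funext i
    fin_cases i <;>
      simp [shaped, Matrix.mulVec, dotProduct, Fin.sum_univ_three] <;> ring_nf
    · -- first coordinate: x' = e^{2^n} x + (y' + e y)^{2^n}
      have key : e ^ 2 ^ n * (x + y ^ 2 ^ n) = x' + y' ^ 2 ^ n := by
        field_simp at he; linear_combination he
      rw [add_pow_char_pow (p := 2), mul_pow]
      linear_combination -key - y' ^ 2 ^ n * h2
    · linear_combination -y * e * h2
end

section
/- Let t ∈ GF(q²)\GF(q) with q = 2^h, gcd(n,h)=1. Then the only pairs (x,y) ∈ GF(q)² with x(t^{2^n}+1) + y·t^{2^n} = (x(t+1) + y·t)^{2^n} are (x,y) ∈ {0,1}². Consequently a Baer subplane secant to ℓ∞ that is not a C-plane contains at most four points of the translation oval. -/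
lemma fixpow_mul {F : Type} [Monoid F] (x : F) (n : ℕ) (hx : x ^ 2 ^ n = x) :
    ∀ k, x ^ 2 ^ (n * k) = x := by
  intro k
  induction k with
  | zero => simp
  | succ k ih => rw [Nat.mul_succ, pow_add, pow_mul, ih, hx]

lemma fixpow_gcd {F : Type} [Monoid F] :
    ∀ (n h : ℕ) (x : F), x ^ 2 ^ n = x → x ^ 2 ^ h = x → x ^ 2 ^ (Nat.gcd n h) = x := by
  intro n
  induction n using Nat.strong_induction_on with
  | _ n ih =>
    intro h x hnf hhf
    rcases Nat.eq_zero_or_pos n with rfl | hpos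
    · simpa [Nat.gcd_zero_left] using hhf
    · rw [Nat.gcd_rec]
      have hmod : x ^ 2 ^ (h % n) = x := by
        calc x ^ 2 ^ (h % n) = (x ^ 2 ^ (n * (h / n))) ^ 2 ^ (h % n) := by
              rw [fixpow_mul x n hnf]
          _ = x ^ (2 ^ (n * (h / n)) * 2 ^ (h % n)) := by rw [← pow_mul]
          _ = x ^ 2 ^ (n * (h / n) + h % n) := by rw [pow_add]
          _ = x ^ 2 ^ h := by rw [Nat.div_add_mod]
          _ = x := hhf
      exact ih (h % n) (Nat.mod_lt _ hpos) n x hmod hnf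

/-- Let t ∈ GF(q²)\GF(q), q = 2^h, gcd(n,h)=1. The only pairs (x,y) ∈ GF(q)² with
x(t^{2^n}+1) + y t^{2^n} = (x(t+1) + y t)^{2^n} are (x,y) ∈ {0,1}²; consequently the
corresponding Baer subplane (not a C-plane) contains at most four points of the
translation oval. -/
theorem stmt6 (h n : ℕ) (hh : 1 ≤ h) (hn0 : 1 ≤ n) (hn : Nat.gcd n h = 1)
    (F : Type) [Field F] [Fintype F] (hcard : Fintype.card F = 2 ^ (2 * h)) [CharP F 2]
    (Fq : Subfield F) (hFq : Nat.card Fq = 2 ^ h)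
    (t : F) (ht : t ∉ Fq) :
    (∀ x y : F, x ∈ Fq → y ∈ Fq →
      x * (t ^ 2 ^ n + 1) + y * t ^ 2 ^ n = (x * (t + 1) + y * t) ^ 2 ^ n →
      (x = 0 ∨ x = 1) ∧ (y = 0 ∨ y = 1)) ∧
    {p : F × F | p.1 ∈ Fq ∧ p.2 ∈ Fq ∧
      p.1 * (t ^ 2 ^ n + 1) + p.2 * t ^ 2 ^ n =
        (p.1 * (t + 1) + p.2 * t) ^ 2 ^ n}.ncard ≤ 4 := by
  classical
  haveI : Finite Fq := Subtype.finite
  haveI : Fintype Fq := Fintype.ofFinite Fq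
  have hinj : Function.Injective fun x : F => x ^ 2 ^ n := by
    intro a b hab
    have h2 : (frobenius F 2)^[n] a = (frobenius F 2)^[n] b := by
      simpa [iterate_frobenius] using hab
    exact Function.Injective.iterate (frobenius_inj F 2) n h2
  have hfix : ∀ z : F, z ∈ Fq → z ^ 2 ^ h = z := by
    intro z hz
    have hc : Fintype.card Fq = 2 ^ h := by rw [← Nat.card_eq_fintype_card]; exact hFq
    have := FiniteField.pow_card (⟨z, hz⟩ : Fq)
    rw [hc] at this
    simpa using congrArg Subtype.val this
  have htn : t ^ 2 ^ n ∉ Fq := by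
    intro hT
    have hsurj : Function.Surjective fun a : Fq => a ^ 2 ^ n := by
      apply Finite.surjective_of_injective
      intro a b hab
      exact Subtype.ext (hinj (by simpa using congrArg Subtype.val hab))
    obtain ⟨s, hs⟩ := hsurj ⟨t ^ 2 ^ n, hT⟩
    have hs' : (s : F) ^ 2 ^ n = t ^ 2 ^ n := by simpa using congrArg Subtype.val hs
    have : (s : F) = t := hinj hs'
    exact ht (this ▸ s.2)
  have key : ∀ x y : F, x ∈ Fq → y ∈ Fq →
      x * (t ^ 2 ^ n + 1) + y * t ^ 2 ^ n = (x * (t + 1) + y * t) ^ 2 ^ n →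
      (x = 0 ∨ x = 1) ∧ (y = 0 ∨ y = 1) := by
    intro x y hx hy heq
    have expand : (x * (t + 1) + y * t) ^ 2 ^ n
        = x ^ 2 ^ n * (t ^ 2 ^ n + 1) + y ^ 2 ^ n * t ^ 2 ^ n := by
      rw [add_pow_char_pow, mul_pow, mul_pow, add_pow_char_pow, one_pow]
    rw [expand] at heq
    set a := x - x ^ 2 ^ n with ha
    set b := y - y ^ 2 ^ n with hb
    have hrel : a + (a + b) * t ^ 2 ^ n = 0 := by
      rw [ha, hb]; linear_combination heq
    have hab : a + b = 0 := by
      by_contra habne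
      apply htn
      have : t ^ 2 ^ n = (-a) / (a + b) := by
        rw [eq_div_iff habne]
        linear_combination hrel
      rw [this]
      have haF : a ∈ Fq := Fq.sub_mem hx (Fq.pow_mem hx _)
      have hbF : b ∈ Fq := Fq.sub_mem hy (Fq.pow_mem hy _)
      exact Fq.div_mem (Fq.neg_mem haF) (Fq.add_mem haF hbF)
    have ha0 : a = 0 := by rw [hab, zero_mul, add_zero] at hrel; exact hrel
    have hb0 : b = 0 := by linear_combination hab - ha0
    have hxfix : x ^ 2 ^ n = x := by linear_combination -ha0
    have hyfix : y ^ 2 ^ n = y := by linear_combination -hb0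
    have hx2 : x ^ 2 = x := by
      have := fixpow_gcd n h x hxfix (hfix x hx)
      rwa [hn, pow_one] at this
    have hy2 : y ^ 2 = y := by
      have := fixpow_gcd n h y hyfix (hfix y hy)
      rwa [hn, pow_one] at this
    constructor
    · rcases mul_eq_zero.mp (show x * (x - 1) = 0 by linear_combination hx2) with h0 | h1
      · exact Or.inl h0
      · exact Or.inr (by linear_combination h1)
    · rcases mul_eq_zero.mp (show y * (y - 1) = 0 by linear_combination hy2) with h0 | h1
      · exact Or.inl h0
      · exact Or.inr (by linear_combination h1)
  refine ⟨key, ?_⟩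
  have hsub : {p : F × F | p.1 ∈ Fq ∧ p.2 ∈ Fq ∧
      p.1 * (t ^ 2 ^ n + 1) + p.2 * t ^ 2 ^ n =
        (p.1 * (t + 1) + p.2 * t) ^ 2 ^ n} ⊆
      ({((0:F),(0:F)), (0,1), (1,0), (1,1)} : Set (F × F)) := by
    rintro ⟨x, y⟩ ⟨hx, hy, heq⟩
    obtain ⟨hx01, hy01⟩ := key x y hx hy heq
    rcases hx01 with rfl | rfl <;> rcases hy01 with rfl | rfl <;> simp
  refine le_trans (Set.ncard_le_ncard hsub ?_) ?_
  · exact (Set.finite_singleton _).insert _ |>.insert _ |>.insert _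
  · refine le_trans (Set.ncard_insert_le _ _) ?_
    have h1 := Set.ncard_insert_le ((0:F),(1:F)) ({((1:F),(0:F)), (1,1)} : Set (F × F))
    have h2 := Set.ncard_insert_le ((1:F),(0:F)) ({((1:F),(1:F))} : Set (F × F))
    have h3 : ({((1:F),(1:F))} : Set (F × F)).ncard = 1 := Set.ncard_singleton _
    omega
end

section
/- Under the hypotheses (A1)–(A4) on a set C of q² affine points and a family of C-planes in PG(4,q), q even, no three points of C are collinear. -/
variable {F : Type} [Field F]

/-- Points of PG(4,q). -/
abbrev Pt4 (F : Type) [Field F] := Projectivization F (Fin 5 → F)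

/-- A projective subspace of PG(4,q) coming from a k-dimensional vector subspace. -/
def IsSub (k : ℕ) (S : Set (Pt4 F)) : Prop :=
  ∃ W : Submodule F (Fin 5 → F), Module.finrank F W = k ∧ S = {p | p.rep ∈ W}

/-- A line of PG(4,q). -/
def IsLine (S : Set (Pt4 F)) : Prop := IsSub 2 S

/-- A plane of PG(4,q). -/
def IsPlane (S : Set (Pt4 F)) : Prop := IsSub 3 S

/-- The hyperplane at infinity x₄ = 0. -/
def Sinf : Set (Pt4 F) := {p | p.rep 4 = 0}

/-- Three points are collinear. -/
def Collin (p q r : Pt4 F) : Prop :=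
  ∃ ℓ : Set (Pt4 F), IsLine ℓ ∧ p ∈ ℓ ∧ q ∈ ℓ ∧ r ∈ ℓ

/-- No three points of `S` are collinear. -/
def NoThreeCollinear (S : Set (Pt4 F)) : Prop :=
  ∀ p ∈ S, ∀ q ∈ S, ∀ r ∈ S, p ≠ q → p ≠ r → q ≠ r → ¬ Collin p q r

/-! The line through two points of `C` lies in their `C`-plane, so a third point of `C` on it
would be a collinear triple inside the arc cut out by that plane. -/

theorem Projectivization.span_rep_pair_eq {K V : Type*} [Field K] [AddCommGroup V] [Module K V]
    {p q : Projectivization K V} (hpq : p ≠ q) {W : Submodule K V}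
    (hW : Module.finrank K W = 2) (hp : p.rep ∈ W) (hq : q.rep ∈ W) :
    Submodule.span K {p.rep, q.rep} = W := by
  have : FiniteDimensional K W := Module.finite_of_finrank_eq_succ hW
  have hind : LinearIndependent K ![p.rep, q.rep] := by
    have h :=
      Projectivization.independent_mk_iff_LinearIndependent (K := K) p.rep_nonzero q.rep_nonzero
    rw [Projectivization.mk_rep, Projectivization.mk_rep,
      Projectivization.independent_pair_iff_ne] at h
    exact h.mp hpq
  refine Submodule.eq_of_le_of_finrank_eq ?_ ?_
  · exact Submodule.span_le.mpr (Set.pair_subset hp hq)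
  · rw [← Matrix.range_cons_cons_empty, finrank_span_eq_card hind, hW, Fintype.card_fin]

theorem IsLine.subset_of_isSub {ℓ π : Set (Pt4 F)} {k : ℕ} (hℓ : IsLine ℓ) (hπ : IsSub k π)
    {p q : Pt4 F} (hpq : p ≠ q) (hpℓ : p ∈ ℓ) (hqℓ : q ∈ ℓ) (hpπ : p ∈ π) (hqπ : q ∈ π) :
    ℓ ⊆ π := by
  obtain ⟨W, hW, rfl⟩ := hℓ
  obtain ⟨V, -, rfl⟩ := hπ
  rw [← Projectivization.span_rep_pair_eq hpq hW hpℓ hqℓ]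
  exact fun r hr => Submodule.span_le.mpr (Set.pair_subset hpπ hqπ) hr

theorem noThreeCollinear_of_forall_pair_mem_arc {C : Set (Pt4 F)} {planes : Set (Set (Pt4 F))}
    (hsub : ∀ π ∈ planes, ∃ k, IsSub k π) (harc : ∀ π ∈ planes, NoThreeCollinear (π ∩ C))
    (hpair : ∀ p ∈ C, ∀ q ∈ C, p ≠ q → ∃ π ∈ planes, p ∈ π ∧ q ∈ π) :
    NoThreeCollinear C := by
  rintro p hp q hq r hr hpq hpr hqr ⟨ℓ, hℓ, hpℓ, hqℓ, hrℓ⟩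
  obtain ⟨π, hπ, hpπ, hqπ⟩ := hpair p hp q hq hpq
  obtain ⟨k, hk⟩ := hsub π hπ
  have hℓπ := hℓ.subset_of_isSub hk hpq hpℓ hqℓ hpπ hqπ
  exact harc π hπ p ⟨hpπ, hp⟩ q ⟨hqπ, hq⟩ r ⟨hℓπ hrℓ, hr⟩ hpq hpr hqr ⟨ℓ, hℓ, hpℓ, hqℓ, hrℓ⟩

theorem stmt12_general [Fintype F]
    (C : Set (Pt4 F)) (Cpl : Set (Set (Pt4 F)))
    (hplane : ∀ π ∈ Cpl, IsPlane π)
    (A1 : ∀ π ∈ Cpl, (π ∩ C).ncard = Fintype.card F ∧ NoThreeCollinear (π ∩ C))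
    (A2 : ∀ p ∈ C, ∀ q ∈ C, p ≠ q → ∃! π, π ∈ Cpl ∧ p ∈ π ∧ q ∈ π) :
    NoThreeCollinear C :=
  noThreeCollinear_of_forall_pair_mem_arc (fun π hπ => ⟨3, hplane π hπ⟩) (fun π hπ => (A1 π hπ).2)
    fun p hp q hq hpq => (A2 p hp q hq hpq).exists.imp fun _ h => ⟨h.1, h.2⟩

/-- Under hypotheses (A1)–(A4) on a set C of q² affine points and a family of C-planes
in PG(4,q), q even, no three points of C are collinear. -/
theorem stmt12 [Fintype F] [CharP F 2] (hq2 : 2 < Fintype.card F)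
    (C : Set (Pt4 F)) (Cpl : Set (Set (Pt4 F)))
    (hC : C.ncard = Fintype.card F ^ 2) (hCaff : ∀ p ∈ C, p ∉ Sinf)
    (hplane : ∀ π ∈ Cpl, IsPlane π)
    (A1 : ∀ π ∈ Cpl, (π ∩ C).ncard = Fintype.card F ∧ NoThreeCollinear (π ∩ C))
    (A2 : ∀ p ∈ C, ∀ q ∈ C, p ≠ q → ∃! π, π ∈ Cpl ∧ p ∈ π ∧ q ∈ π)
    (A3 : ∀ p : Pt4 F, p ∉ Sinf → p ∉ C → ∃! π, π ∈ Cpl ∧ p ∈ π)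
    (A4 : ∀ π : Set (Pt4 F), IsPlane π → 3 ≤ (π ∩ C).ncard →
      (π ∩ C).ncard = 4 ∨ π ∈ Cpl) :
    NoThreeCollinear C :=
  stmt12_general C Cpl hplane A1 A2
end

section
/- In PG(3,q), q = 2^h even, the set C(2^n) = {(t^{2^n+1}, t^{2^n}, t, 1) : t ∈ GF(q) ∪ {∞}} (with the point for t = ∞ being (1,0,0,0)) is a (q+1)-arc, i.e., no four of its points are coplanar, when gcd(n,h) = 1. -/
variable {F : Type} [Field F]

/-- The twisted (q+1)-arc C(2^n) = {(t^{2^n+1}, t^{2^n}, t, 1) : t ∈ GF(q)} ∪ {(1,0,0,0)}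
in PG(3,q). -/
def twistedArc (n : ℕ) : Set (Projectivization F (Fin 4 → F)) :=
  {p | ∃ (t : F) (hv : (![t ^ (2 ^ n + 1), t ^ 2 ^ n, t, 1] : Fin 4 → F) ≠ 0),
      p = Projectivization.mk F ![t ^ (2 ^ n + 1), t ^ 2 ^ n, t, 1] hv} ∪
    {p | ∃ hv : (![1, 0, 0, 0] : Fin 4 → F) ≠ 0,
      p = Projectivization.mk F ![1, 0, 0, 0] hv}

namespace S18

lemma two0 [CharP F 2] : (2 : F) = 0 := by
  have := CharP.cast_eq_zero F 2; exact_mod_cast this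

/-- If x is fixed by the n-th power of Frobenius, gcd(n,h)=1, then x is fixed by Frobenius. -/
lemma fix (h n : ℕ) (hn : Nat.gcd n h = 1) [Fintype F]
    (hcard : Fintype.card F = 2 ^ h) [CharP F 2] {x : F} (hx : x ^ 2 ^ n = x) :
    x ^ 2 = x := by
  have t0 : (2 : F) = 0 := two0
  have hinj : Function.Injective (fun y : F => y ^ 2) := by
    intro a b hab
    simp only at hab
    have hsub : (a - b) ^ 2 = 0 := by linear_combination hab + (b * b - a * b) * t0
    have := pow_eq_zero_iff (n := 2) (by norm_num) |>.mp hsub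
    exact sub_eq_zero.mp this
  have hbij := Finite.injective_iff_bijective.mp hinj
  let g : Equiv.Perm F := Equiv.ofBijective _ hbij
  have hgapp : ∀ y : F, g y = y ^ 2 := fun y => rfl
  have hgk : ∀ (k : ℕ) (y : F), (g ^ k) y = y ^ 2 ^ k := by
    intro k
    induction k with
    | zero => intro y; simp
    | succ k ih =>
      intro y
      rw [pow_succ, Equiv.Perm.mul_apply, hgapp, ih, ← pow_mul, pow_succ]; ring_nf
  have hq : x ^ 2 ^ h = x := by rw [← hcard]; exact FiniteField.pow_card x
  set S := MulAction.stabilizer (Equiv.Perm F) x with hS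
  have hgn : g ^ n ∈ S := by
    rw [MulAction.mem_stabilizer_iff]
    show (g ^ n) x = x
    rw [hgk]; exact hx
  have hgh : g ^ h ∈ S := by
    rw [MulAction.mem_stabilizer_iff]
    show (g ^ h) x = x
    rw [hgk]; exact hq
  have hb := Nat.gcd_eq_gcd_ab n h
  rw [hn] at hb
  have hgdecomp : g = (g ^ n) ^ Nat.gcdA n h * (g ^ h) ^ Nat.gcdB n h := by
    have : g ^ (1 : ℤ) = g ^ ((n : ℤ) * Nat.gcdA n h + (h : ℤ) * Nat.gcdB n h) := by
      rw [← hb]; norm_num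
    rw [zpow_one, zpow_add, zpow_mul, zpow_mul, zpow_natCast, zpow_natCast] at this
    exact this
  have hg1 : g ∈ S := by
    rw [hgdecomp]
    exact mul_mem (S.zpow_mem hgn _) (S.zpow_mem hgh _)
  have : g x = x := hg1
  rwa [hgapp] at this

/-- x ↦ x^(2^n - 1) is injective on nonzero elements. -/
lemma powinj (h n : ℕ) (hn : Nat.gcd n h = 1) [Fintype F]
    (hcard : Fintype.card F = 2 ^ h) [CharP F 2] {x y : F} (hx : x ≠ 0) (hy : y ≠ 0)
    (hxy : x ^ (2 ^ n - 1) = y ^ (2 ^ n - 1)) : x = y := by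
  have h1 : (1 : ℕ) ≤ 2 ^ n := Nat.one_le_two_pow
  have hsk : 2 ^ n = (2 ^ n - 1) + 1 := (Nat.succ_pred_eq_of_pos h1).symm
  have hone : (x * y⁻¹) ^ (2 ^ n - 1) = 1 := by
    rw [mul_pow, inv_pow, hxy]
    exact mul_inv_cancel₀ (pow_ne_zero _ hy)
  have hz : (x * y⁻¹) ^ 2 ^ n = x * y⁻¹ := by
    rw [hsk, pow_succ, hone, one_mul]
  have hz2 := fix h n hn hcard hz
  have hz0 : x * y⁻¹ ≠ 0 := mul_ne_zero hx (inv_ne_zero hy)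
  have hz1 : x * y⁻¹ = 1 := by
    have : (x * y⁻¹) * (x * y⁻¹) = (x * y⁻¹) * 1 := by
      rw [mul_one, ← sq]; exact hz2
    exact mul_left_cancel₀ hz0 this
  calc x = x * y⁻¹ * y := by field_simp
  _ = y := by rw [hz1, one_mul]

/-- If C u^σ = D u for two distinct nonzero u, then C = D = 0. -/
lemma two_fixed (h n : ℕ) (hn : Nat.gcd n h = 1) [Fintype F]
    (hcard : Fintype.card F = 2 ^ h) [CharP F 2] {C D u v : F}
    (hu : u ≠ 0) (hv : v ≠ 0) (huv : u ≠ v)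
    (h1 : C * u ^ 2 ^ n = D * u) (h2 : C * v ^ 2 ^ n = D * v) : C = 0 ∧ D = 0 := by
  have hsk : 2 ^ n = (2 ^ n - 1) + 1 := (Nat.succ_pred_eq_of_pos Nat.one_le_two_pow).symm
  rw [hsk, pow_succ, ← mul_assoc] at h1 h2
  have e1 : C * u ^ (2 ^ n - 1) = D := mul_right_cancel₀ hu h1
  have e2 : C * v ^ (2 ^ n - 1) = D := mul_right_cancel₀ hv h2
  by_cases hC : C = 0
  · refine ⟨hC, ?_⟩
    rw [hC, zero_mul] at e1
    exact e1.symm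
  · exact absurd (powinj h n hn hcard hu hv
      (mul_left_cancel₀ hC (e1.trans e2.symm))) huv

lemma core_inf (h n : ℕ) (hn : Nat.gcd n h = 1) [Fintype F]
    (hcard : Fintype.card F = 2 ^ h) [CharP F 2]
    {a b c d t1 t2 t3 : F} (h12 : t1 ≠ t2) (h13 : t1 ≠ t3) (h23 : t2 ≠ t3) (ha : a = 0)
    (e1 : a * t1 ^ (2 ^ n + 1) + b * t1 ^ 2 ^ n + c * t1 + d = 0)
    (e2 : a * t2 ^ (2 ^ n + 1) + b * t2 ^ 2 ^ n + c * t2 + d = 0)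
    (e3 : a * t3 ^ (2 ^ n + 1) + b * t3 ^ 2 ^ n + c * t3 + d = 0) :
    b = 0 ∧ c = 0 ∧ d = 0 := by
  subst ha
  have t0 : (2 : F) = 0 := two0
  have f2 : (t1 + t2) ^ 2 ^ n = t1 ^ 2 ^ n + t2 ^ 2 ^ n := add_pow_char_pow t1 t2 2 n
  have f3 : (t1 + t3) ^ 2 ^ n = t1 ^ 2 ^ n + t3 ^ 2 ^ n := add_pow_char_pow t1 t3 2 n
  have hu : t1 + t2 ≠ 0 := fun h0 => h12 (by linear_combination h0 - t2 * t0)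
  have hv : t1 + t3 ≠ 0 := fun h0 => h13 (by linear_combination h0 - t3 * t0)
  have huv : t1 + t2 ≠ t1 + t3 := fun h0 => h23 (by linear_combination h0)
  have r2 : b * (t1 + t2) ^ 2 ^ n = c * (t1 + t2) := by
    rw [f2]; linear_combination e1 + e2 - (c * t1 + c * t2 + d) * t0
  have r3 : b * (t1 + t3) ^ 2 ^ n = c * (t1 + t3) := by
    rw [f3]; linear_combination e1 + e3 - (c * t1 + c * t3 + d) * t0
  obtain ⟨hb, hc⟩ := two_fixed h n hn hcard hu hv huv r2 r3
  exact ⟨hb, hc, by linear_combination e1 - t1 ^ (2 ^ n) * hb - t1 * hc⟩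

lemma core_fin (h n : ℕ) (hn : Nat.gcd n h = 1) [Fintype F]
    (hcard : Fintype.card F = 2 ^ h) [CharP F 2]
    {a b c d t1 t2 t3 t4 : F}
    (h12 : t1 ≠ t2) (h13 : t1 ≠ t3) (h14 : t1 ≠ t4)
    (h23 : t2 ≠ t3) (h24 : t2 ≠ t4) (h34 : t3 ≠ t4)
    (e1 : a * t1 ^ (2 ^ n + 1) + b * t1 ^ 2 ^ n + c * t1 + d = 0)
    (e2 : a * t2 ^ (2 ^ n + 1) + b * t2 ^ 2 ^ n + c * t2 + d = 0)
    (e3 : a * t3 ^ (2 ^ n + 1) + b * t3 ^ 2 ^ n + c * t3 + d = 0)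
    (e4 : a * t4 ^ (2 ^ n + 1) + b * t4 ^ 2 ^ n + c * t4 + d = 0) :
    a = 0 ∧ b = 0 ∧ c = 0 ∧ d = 0 := by
  by_cases ha : a = 0
  · obtain ⟨hb, hc, hd⟩ := core_inf h n hn hcard h12 h13 h23 ha e1 e2 e3
    exact ⟨ha, hb, hc, hd⟩
  · exfalso
    have t0 : (2 : F) = 0 := two0
    have key : ∀ s : F, s ≠ t1 → a * s ^ (2 ^ n + 1) + b * s ^ 2 ^ n + c * s + d = 0 →
        (a * t1 ^ 2 ^ n + c) * ((s + t1)⁻¹) ^ 2 ^ n + (a * t1 + b) * (s + t1)⁻¹ + a = 0 := by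
      intro s hs es
      have hzne : s + t1 ≠ 0 := fun h0 => hs (by linear_combination h0 - t1 * t0)
      have hfe : (s + t1) ^ 2 ^ n = s ^ 2 ^ n + t1 ^ 2 ^ n := add_pow_char_pow s t1 2 n
      have hps : s ^ (2 ^ n + 1) = s ^ 2 ^ n * s := pow_succ s (2 ^ n)
      have hpt : t1 ^ (2 ^ n + 1) = t1 ^ 2 ^ n * t1 := pow_succ t1 (2 ^ n)
      have key0 : a * ((s + t1) ^ 2 ^ n * (s + t1)) + (a * t1 + b) * (s + t1) ^ 2 ^ n
          + (a * t1 ^ 2 ^ n + c) * (s + t1) = 0 := by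
        rw [hfe]
        linear_combination es + e1 - a * hps - a * hpt +
          (a * s ^ 2 ^ n * t1 + a * t1 ^ 2 ^ n * s + a * t1 ^ 2 ^ n * t1 - d) * t0
      have hw : (s + t1) * (s + t1)⁻¹ = 1 := mul_inv_cancel₀ hzne
      have hw2 : (s + t1) ^ 2 ^ n * ((s + t1)⁻¹) ^ 2 ^ n = 1 := by
        rw [← mul_pow, hw, one_pow]
      linear_combination (((s + t1)⁻¹) ^ 2 ^ n * (s + t1)⁻¹) * key0
        - ((a * t1 ^ 2 ^ n + c) * ((s + t1)⁻¹) ^ 2 ^ n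
            + a * (s + t1) ^ 2 ^ n * ((s + t1)⁻¹) ^ 2 ^ n) * hw
        - ((a * t1 + b) * (s + t1)⁻¹ + a) * hw2
    have k2 := key t2 h12.symm e2
    have k3 := key t3 h13.symm e3
    have k4 := key t4 h14.symm e4
    have h2ne : t2 + t1 ≠ 0 := fun h0 => h12.symm (by linear_combination h0 - t1 * t0)
    have h3ne : t3 + t1 ≠ 0 := fun h0 => h13.symm (by linear_combination h0 - t1 * t0)
    have h4ne : t4 + t1 ≠ 0 := fun h0 => h14.symm (by linear_combination h0 - t1 * t0)
    have w2ne : (t2 + t1)⁻¹ ≠ 0 := inv_ne_zero h2ne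
    have w3ne : (t3 + t1)⁻¹ ≠ 0 := inv_ne_zero h3ne
    have w4ne : (t4 + t1)⁻¹ ≠ 0 := inv_ne_zero h4ne
    have hw23 : (t2 + t1)⁻¹ ≠ (t3 + t1)⁻¹ := by
      intro h0
      have := inv_injective h0
      exact h23 (by linear_combination this)
    have hw24 : (t2 + t1)⁻¹ ≠ (t4 + t1)⁻¹ := by
      intro h0
      have := inv_injective h0
      exact h24 (by linear_combination this)
    have hw34 : (t3 + t1)⁻¹ ≠ (t4 + t1)⁻¹ := by
      intro h0
      have := inv_injective h0
      exact h34 (by linear_combination this)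
    have hu : (t2 + t1)⁻¹ + (t3 + t1)⁻¹ ≠ 0 :=
      fun h0 => hw23 (by linear_combination h0 - (t3 + t1)⁻¹ * t0)
    have hv : (t2 + t1)⁻¹ + (t4 + t1)⁻¹ ≠ 0 :=
      fun h0 => hw24 (by linear_combination h0 - (t4 + t1)⁻¹ * t0)
    have huv : (t2 + t1)⁻¹ + (t3 + t1)⁻¹ ≠ (t2 + t1)⁻¹ + (t4 + t1)⁻¹ :=
      fun h0 => hw34 (by linear_combination h0)
    have fu : ((t2 + t1)⁻¹ + (t3 + t1)⁻¹) ^ 2 ^ n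
        = ((t2 + t1)⁻¹) ^ 2 ^ n + ((t3 + t1)⁻¹) ^ 2 ^ n := add_pow_char_pow _ _ 2 n
    have fv : ((t2 + t1)⁻¹ + (t4 + t1)⁻¹) ^ 2 ^ n
        = ((t2 + t1)⁻¹) ^ 2 ^ n + ((t4 + t1)⁻¹) ^ 2 ^ n := add_pow_char_pow _ _ 2 n
    have r23 : (a * t1 ^ 2 ^ n + c) * ((t2 + t1)⁻¹ + (t3 + t1)⁻¹) ^ 2 ^ n
        = (a * t1 + b) * ((t2 + t1)⁻¹ + (t3 + t1)⁻¹) := by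
      rw [fu]
      linear_combination k2 + k3
        - ((a * t1 + b) * (t2 + t1)⁻¹ + (a * t1 + b) * (t3 + t1)⁻¹ + a) * t0
    have r24 : (a * t1 ^ 2 ^ n + c) * ((t2 + t1)⁻¹ + (t4 + t1)⁻¹) ^ 2 ^ n
        = (a * t1 + b) * ((t2 + t1)⁻¹ + (t4 + t1)⁻¹) := by
      rw [fv]
      linear_combination k2 + k4
        - ((a * t1 + b) * (t2 + t1)⁻¹ + (a * t1 + b) * (t4 + t1)⁻¹ + a) * t0
    obtain ⟨hC, hD⟩ := two_fixed h n hn hcard hu hv huv r23 r24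
    exact ha (by linear_combination k2 - ((t2 + t1)⁻¹) ^ 2 ^ n * hC - (t2 + t1)⁻¹ * hD)


noncomputable section
open Projectivization

def tvec (n : ℕ) (t : F) : Fin 4 → F := ![t ^ (2 ^ n + 1), t ^ 2 ^ n, t, 1]

lemma tvec_ne (n : ℕ) (t : F) : tvec n t ≠ 0 := by
  intro h0
  have := congrFun h0 3
  simp [tvec] at this

lemma ivec_ne : (![1, 0, 0, 0] : Fin 4 → F) ≠ 0 := by
  intro h0
  have := congrFun h0 0
  simp at this

def tpt (n : ℕ) (t : F) : Projectivization F (Fin 4 → F) :=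
  Projectivization.mk F (tvec n t) (tvec_ne n t)

def ipt : Projectivization F (Fin 4 → F) :=
  Projectivization.mk F ![1, 0, 0, 0] ivec_ne

lemma mem_arc_iff (n : ℕ) (p : Projectivization F (Fin 4 → F)) :
    p ∈ twistedArc n ↔ (∃ t : F, p = tpt n t) ∨ p = ipt := by
  constructor
  · rintro (⟨t, hv, rfl⟩ | ⟨hv, rfl⟩)
    · exact Or.inl ⟨t, rfl⟩
    · exact Or.inr rfl
  · rintro (⟨t, rfl⟩ | rfl)
    · exact Or.inl ⟨t, tvec_ne n t, rfl⟩
    · exact Or.inr ⟨ivec_ne, rfl⟩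

lemma tpt_inj (n : ℕ) : Function.Injective (tpt n : F → _) := by
  intro s t hst
  rw [tpt, tpt, Projectivization.mk_eq_mk_iff] at hst
  obtain ⟨c, hc⟩ := hst
  have h3 := congrFun hc 3
  have h2 := congrFun hc 2
  simp [tvec, Units.smul_def] at h3 h2
  subst h3
  simp at h2
  exact h2.symm

lemma tpt_ne_ipt (n : ℕ) (t : F) : tpt n t ≠ ipt := by
  intro h0
  rw [tpt, ipt, Projectivization.mk_eq_mk_iff] at h0
  obtain ⟨c, hc⟩ := h0
  have h3 := congrFun hc 3
  simp [tvec, Units.smul_def] at h3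

lemma indep_of_dual (v : Fin 4 → Fin 4 → F)
    (hcore : ∀ u : Fin 4 → F,
      (∀ i, v i 0 * u 0 + v i 1 * u 1 + v i 2 * u 2 + v i 3 * u 3 = 0) → u = 0) :
    LinearIndependent F v := by
  classical
  let M : Matrix (Fin 4) (Fin 4) F := Matrix.of v
  have hdet : M.det ≠ 0 := by
    intro h0
    obtain ⟨u, hu0, hu⟩ := Matrix.exists_mulVec_eq_zero_iff.mpr h0
    apply hu0
    apply hcore
    intro i
    have := congrFun hu i
    simpa [M, Matrix.mulVec, dotProduct, Fin.sum_univ_four] using this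
  have hunit : IsUnit M := (Matrix.isUnit_iff_isUnit_det M).mpr hdet.isUnit
  exact Matrix.linearIndependent_rows_iff_isUnit.mpr hunit


lemma rep_indep {p1 p2 p3 p4 : Projectivization F (Fin 4 → F)}
    {v1 v2 v3 v4 : Fin 4 → F} {c1 c2 c3 c4 : Fˣ}
    (hc1 : c1 • v1 = p1.rep) (hc2 : c2 • v2 = p2.rep)
    (hc3 : c3 • v3 = p3.rep) (hc4 : c4 • v4 = p4.rep)
    (hV : LinearIndependent F ![v1, v2, v3, v4]) :
    LinearIndependent F ![p1.rep, p2.rep, p3.rep, p4.rep] := by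
  have hsm := hV.units_smul ![c1, c2, c3, c4]
  have heq : (![c1, c2, c3, c4] : Fin 4 → Fˣ) • ![v1, v2, v3, v4]
      = ![p1.rep, p2.rep, p3.rep, p4.rep] := by
    funext i
    fin_cases i <;> simp [Pi.smul_apply'] <;> assumption
  rwa [heq] at hsm

lemma indep_fin (h n : ℕ) (hn : Nat.gcd n h = 1) [Fintype F]
    (hcard : Fintype.card F = 2 ^ h) [CharP F 2] {t1 t2 t3 t4 : F}
    (h12 : t1 ≠ t2) (h13 : t1 ≠ t3) (h14 : t1 ≠ t4)
    (h23 : t2 ≠ t3) (h24 : t2 ≠ t4) (h34 : t3 ≠ t4) :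
    LinearIndependent F ![tvec n t1, tvec n t2, tvec n t3, tvec n t4] := by
  apply indep_of_dual
  intro u hu
  have e1 := hu 0
  have e2 := hu 1
  have e3 := hu 2
  have e4 := hu 3
  simp only [tvec, Matrix.cons_val_zero, Matrix.cons_val_one, Matrix.head_cons,
    Matrix.cons_val_two, Matrix.tail_cons, Matrix.cons_val_three] at e1 e2 e3 e4
  have E1 : u 0 * t1 ^ (2 ^ n + 1) + u 1 * t1 ^ 2 ^ n + u 2 * t1 + u 3 = 0 := by
    linear_combination e1
  have E2 : u 0 * t2 ^ (2 ^ n + 1) + u 1 * t2 ^ 2 ^ n + u 2 * t2 + u 3 = 0 := by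
    linear_combination e2
  have E3 : u 0 * t3 ^ (2 ^ n + 1) + u 1 * t3 ^ 2 ^ n + u 2 * t3 + u 3 = 0 := by
    linear_combination e3
  have E4 : u 0 * t4 ^ (2 ^ n + 1) + u 1 * t4 ^ 2 ^ n + u 2 * t4 + u 3 = 0 := by
    linear_combination e4
  obtain ⟨ha, hb, hc, hd⟩ := core_fin h n hn hcard h12 h13 h14 h23 h24 h34 E1 E2 E3 E4
  funext i
  fin_cases i
  exacts [ha, hb, hc, hd]

lemma indep_inf0 (h n : ℕ) (hn : Nat.gcd n h = 1) [Fintype F]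
    (hcard : Fintype.card F = 2 ^ h) [CharP F 2] {s1 s2 s3 : F}
    (h12 : s1 ≠ s2) (h13 : s1 ≠ s3) (h23 : s2 ≠ s3) :
    LinearIndependent F ![(![1, 0, 0, 0] : Fin 4 → F), tvec n s1, tvec n s2, tvec n s3] := by
  apply indep_of_dual
  intro u hu
  have e0 := hu 0
  have e1 := hu 1
  have e2 := hu 2
  have e3 := hu 3
  simp only [tvec, Matrix.cons_val_zero, Matrix.cons_val_one, Matrix.head_cons,
    Matrix.cons_val_two, Matrix.tail_cons, Matrix.cons_val_three] at e0 e1 e2 e3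
  have Ea : u 0 = 0 := by linear_combination e0
  have E1 : u 0 * s1 ^ (2 ^ n + 1) + u 1 * s1 ^ 2 ^ n + u 2 * s1 + u 3 = 0 := by
    linear_combination e1
  have E2 : u 0 * s2 ^ (2 ^ n + 1) + u 1 * s2 ^ 2 ^ n + u 2 * s2 + u 3 = 0 := by
    linear_combination e2
  have E3 : u 0 * s3 ^ (2 ^ n + 1) + u 1 * s3 ^ 2 ^ n + u 2 * s3 + u 3 = 0 := by
    linear_combination e3
  obtain ⟨hb, hc, hd⟩ := core_inf h n hn hcard h12 h13 h23 Ea E1 E2 E3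
  funext i
  fin_cases i
  exacts [Ea, hb, hc, hd]

lemma indep_inf1 (h n : ℕ) (hn : Nat.gcd n h = 1) [Fintype F]
    (hcard : Fintype.card F = 2 ^ h) [CharP F 2] {s1 s2 s3 : F}
    (h12 : s1 ≠ s2) (h13 : s1 ≠ s3) (h23 : s2 ≠ s3) :
    LinearIndependent F ![tvec n s1, (![1, 0, 0, 0] : Fin 4 → F), tvec n s2, tvec n s3] := by
  apply indep_of_dual
  intro u hu
  have e0 := hu 0
  have e1 := hu 1
  have e2 := hu 2
  have e3 := hu 3
  simp only [tvec, Matrix.cons_val_zero, Matrix.cons_val_one, Matrix.head_cons,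
    Matrix.cons_val_two, Matrix.tail_cons, Matrix.cons_val_three] at e0 e1 e2 e3
  have Ea : u 0 = 0 := by linear_combination e1
  have E1 : u 0 * s1 ^ (2 ^ n + 1) + u 1 * s1 ^ 2 ^ n + u 2 * s1 + u 3 = 0 := by
    linear_combination e0
  have E2 : u 0 * s2 ^ (2 ^ n + 1) + u 1 * s2 ^ 2 ^ n + u 2 * s2 + u 3 = 0 := by
    linear_combination e2
  have E3 : u 0 * s3 ^ (2 ^ n + 1) + u 1 * s3 ^ 2 ^ n + u 2 * s3 + u 3 = 0 := by
    linear_combination e3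
  obtain ⟨hb, hc, hd⟩ := core_inf h n hn hcard h12 h13 h23 Ea E1 E2 E3
  funext i
  fin_cases i
  exacts [Ea, hb, hc, hd]

lemma indep_inf2 (h n : ℕ) (hn : Nat.gcd n h = 1) [Fintype F]
    (hcard : Fintype.card F = 2 ^ h) [CharP F 2] {s1 s2 s3 : F}
    (h12 : s1 ≠ s2) (h13 : s1 ≠ s3) (h23 : s2 ≠ s3) :
    LinearIndependent F ![tvec n s1, tvec n s2, (![1, 0, 0, 0] : Fin 4 → F), tvec n s3] := by
  apply indep_of_dual
  intro u hu
  have e0 := hu 0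
  have e1 := hu 1
  have e2 := hu 2
  have e3 := hu 3
  simp only [tvec, Matrix.cons_val_zero, Matrix.cons_val_one, Matrix.head_cons,
    Matrix.cons_val_two, Matrix.tail_cons, Matrix.cons_val_three] at e0 e1 e2 e3
  have Ea : u 0 = 0 := by linear_combination e2
  have E1 : u 0 * s1 ^ (2 ^ n + 1) + u 1 * s1 ^ 2 ^ n + u 2 * s1 + u 3 = 0 := by
    linear_combination e0
  have E2 : u 0 * s2 ^ (2 ^ n + 1) + u 1 * s2 ^ 2 ^ n + u 2 * s2 + u 3 = 0 := by
    linear_combination e1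
  have E3 : u 0 * s3 ^ (2 ^ n + 1) + u 1 * s3 ^ 2 ^ n + u 2 * s3 + u 3 = 0 := by
    linear_combination e3
  obtain ⟨hb, hc, hd⟩ := core_inf h n hn hcard h12 h13 h23 Ea E1 E2 E3
  funext i
  fin_cases i
  exacts [Ea, hb, hc, hd]

lemma indep_inf3 (h n : ℕ) (hn : Nat.gcd n h = 1) [Fintype F]
    (hcard : Fintype.card F = 2 ^ h) [CharP F 2] {s1 s2 s3 : F}
    (h12 : s1 ≠ s2) (h13 : s1 ≠ s3) (h23 : s2 ≠ s3) :
    LinearIndependent F ![tvec n s1, tvec n s2, tvec n s3, (![1, 0, 0, 0] : Fin 4 → F)] := by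
  apply indep_of_dual
  intro u hu
  have e0 := hu 0
  have e1 := hu 1
  have e2 := hu 2
  have e3 := hu 3
  simp only [tvec, Matrix.cons_val_zero, Matrix.cons_val_one, Matrix.head_cons,
    Matrix.cons_val_two, Matrix.tail_cons, Matrix.cons_val_three] at e0 e1 e2 e3
  have Ea : u 0 = 0 := by linear_combination e3
  have E1 : u 0 * s1 ^ (2 ^ n + 1) + u 1 * s1 ^ 2 ^ n + u 2 * s1 + u 3 = 0 := by
    linear_combination e0
  have E2 : u 0 * s2 ^ (2 ^ n + 1) + u 1 * s2 ^ 2 ^ n + u 2 * s2 + u 3 = 0 := by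
    linear_combination e1
  have E3 : u 0 * s3 ^ (2 ^ n + 1) + u 1 * s3 ^ 2 ^ n + u 2 * s3 + u 3 = 0 := by
    linear_combination e2
  obtain ⟨hb, hc, hd⟩ := core_inf h n hn hcard h12 h13 h23 Ea E1 E2 E3
  funext i
  fin_cases i
  exacts [Ea, hb, hc, hd]

end
end S18

/-- C(2^n) is a (q+1)-arc of PG(3,q), q = 2^h, gcd(n,h)=1: it has q+1 points and no
four of its points are coplanar. -/
theorem stmt18 (h n : ℕ) (hh : 1 ≤ h) (hn : Nat.gcd n h = 1)
    [Fintype F] (hcard : Fintype.card F = 2 ^ h) [CharP F 2] :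
    (twistedArc (F := F) n).ncard = 2 ^ h + 1 ∧
    ∀ p₁ ∈ twistedArc (F := F) n, ∀ p₂ ∈ twistedArc (F := F) n,
    ∀ p₃ ∈ twistedArc (F := F) n, ∀ p₄ ∈ twistedArc (F := F) n,
      p₁ ≠ p₂ → p₁ ≠ p₃ → p₁ ≠ p₄ → p₂ ≠ p₃ → p₂ ≠ p₄ → p₃ ≠ p₄ →
      LinearIndependent F ![p₁.rep, p₂.rep, p₃.rep, p₄.rep] := by
  constructor
  · have harc : twistedArc (F := F) n = Set.range (S18.tpt n) ∪ {S18.ipt} := by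
      ext p
      rw [S18.mem_arc_iff]
      simp [Set.mem_range, eq_comm, or_comm]
    have hdisj : Disjoint (Set.range (S18.tpt n : F → _)) {S18.ipt} := by
      rw [Set.disjoint_singleton_right]
      rintro ⟨t, ht⟩
      exact S18.tpt_ne_ipt n t ht
    rw [harc, Set.ncard_union_eq hdisj (Set.finite_range _) (Set.finite_singleton _),
      Set.ncard_singleton, ← Set.image_univ,
      Set.ncard_image_of_injective _ (S18.tpt_inj n), Set.ncard_univ,
      Nat.card_eq_fintype_card, hcard]
  · intro p1 hp1 p2 hp2 p3 hp3 p4 hp4 h12 h13 h14 h23 h24 h34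
    rw [S18.mem_arc_iff] at hp1 hp2 hp3 hp4
    have hrep : ∀ t : F, ∃ c : Fˣ, c • S18.tvec n t = (S18.tpt n t).rep := fun t =>
      Projectivization.exists_smul_eq_mk_rep F (S18.tvec n t) (S18.tvec_ne n t)
    have hirep : ∃ c : Fˣ, c • (![1, 0, 0, 0] : Fin 4 → F) = (S18.ipt (F := F)).rep :=
      Projectivization.exists_smul_eq_mk_rep F _ S18.ivec_ne
    have hne : ∀ {x y : F}, S18.tpt n x ≠ S18.tpt n y → x ≠ y := fun hxy hxy' =>
      hxy (by rw [hxy'])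
    rcases hp1 with ⟨t1, rfl⟩ | rfl
    · rcases hp2 with ⟨t2, rfl⟩ | rfl
      · rcases hp3 with ⟨t3, rfl⟩ | rfl
        · rcases hp4 with ⟨t4, rfl⟩ | rfl
          · obtain ⟨c1, hc1⟩ := hrep t1
            obtain ⟨c2, hc2⟩ := hrep t2
            obtain ⟨c3, hc3⟩ := hrep t3
            obtain ⟨c4, hc4⟩ := hrep t4
            exact S18.rep_indep hc1 hc2 hc3 hc4
              (S18.indep_fin h n hn hcard (hne h12) (hne h13) (hne h14)
                (hne h23) (hne h24) (hne h34))
          · obtain ⟨c1, hc1⟩ := hrep t1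
            obtain ⟨c2, hc2⟩ := hrep t2
            obtain ⟨c3, hc3⟩ := hrep t3
            obtain ⟨c4, hc4⟩ := hirep
            exact S18.rep_indep hc1 hc2 hc3 hc4
              (S18.indep_inf3 h n hn hcard (hne h12) (hne h13) (hne h23))
        · rcases hp4 with ⟨t4, rfl⟩ | rfl
          · obtain ⟨c1, hc1⟩ := hrep t1
            obtain ⟨c2, hc2⟩ := hrep t2
            obtain ⟨c3, hc3⟩ := hirep
            obtain ⟨c4, hc4⟩ := hrep t4
            exact S18.rep_indep hc1 hc2 hc3 hc4
              (S18.indep_inf2 h n hn hcard (hne h12) (hne h14) (hne h24))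
          · exact absurd rfl h34
      · rcases hp3 with ⟨t3, rfl⟩ | rfl
        · rcases hp4 with ⟨t4, rfl⟩ | rfl
          · obtain ⟨c1, hc1⟩ := hrep t1
            obtain ⟨c2, hc2⟩ := hirep
            obtain ⟨c3, hc3⟩ := hrep t3
            obtain ⟨c4, hc4⟩ := hrep t4
            exact S18.rep_indep hc1 hc2 hc3 hc4
              (S18.indep_inf1 h n hn hcard (hne h13) (hne h14) (hne h34))
          · exact absurd rfl h24
        · exact absurd rfl h23
    · rcases hp2 with ⟨t2, rfl⟩ | rfl
      · rcases hp3 with ⟨t3, rfl⟩ | rfl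
        · rcases hp4 with ⟨t4, rfl⟩ | rfl
          · obtain ⟨c1, hc1⟩ := hirep
            obtain ⟨c2, hc2⟩ := hrep t2
            obtain ⟨c3, hc3⟩ := hrep t3
            obtain ⟨c4, hc4⟩ := hrep t4
            exact S18.rep_indep hc1 hc2 hc3 hc4
              (S18.indep_inf0 h n hn hcard (hne h23) (hne h24) (hne h34))
          · exact absurd rfl h14
        · exact absurd rfl h13
      · exact absurd rfl h12
end
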